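/- arXiv:2011.01726 — 2 statements merged into one kernel-verified Lean document; each statement's English description precedes it below -/
import Mathlib

section
/- Let h be a natural number and let U₁ and U₂ be finite rooted trees with a and b leaves respectively. Then 2^h · Σ_{(α₁, α₂) ∈ Inj(U₁, M_h) × Inj(U₂, M_h)} |{ℓ : ℓ is a Boolean list of length h with ℓ ∈ α₁(V(U₁)) ∩ α₂(V(U₂))}| ≤ a · b · |Inj(U₁, M_h)| · |Inj(U₂, M_h)|. Equivalently, for α₁ and α₂ chosen independently and uniformly at random (when both sets are nonempty), the expected number of leaves of M_h lying in both images is at most a·b/2^h. -/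
attribute [local instance] Classical.propDecidable

/-- A finite rooted tree, encoded by a parent function together with a depth
function recording the graph distance to the root. -/
structure FiniteRootedTree where
  V : Type
  fintypeV : Fintype V
  root : V
  parent : V → V
  depth : V → ℕ
  depth_root : depth root = 0
  depth_parent : ∀ v, v ≠ root → depth v = depth (parent v) + 1
  root_of_depth_zero : ∀ v, depth v = 0 → v = root

attribute [instance] FiniteRootedTree.fintypeV

namespace FiniteRootedTree

/-- `u` is a child of `v`. -/
def IsChild (T : FiniteRootedTree) (u v : T.V) : Prop :=
  u ≠ T.root ∧ T.parent u = v

/-- The number of children of `v`. -/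
noncomputable def numChildren (T : FiniteRootedTree) (v : T.V) : ℕ :=
  Set.ncard {u : T.V | T.IsChild u v}

/-- A leaf is a vertex with no children. -/
def IsLeaf (T : FiniteRootedTree) (v : T.V) : Prop :=
  ∀ u, ¬ T.IsChild u v

/-- The finset of leaves of `T`. -/
noncomputable def leaves (T : FiniteRootedTree) : Finset T.V :=
  Finset.univ.filter fun v => T.IsLeaf v

/-- Probability that the random root-to-leaf walk ends at the leaf `l`:
the product of `1 / c(v)` over the vertices `v ≠ l` on the root-to-`l` path
(equivalently, over the strict ancestors `parent^[k+1] l` of `l`). -/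
noncomputable def leafProb (T : FiniteRootedTree) (l : T.V) : ℝ :=
  ∏ k ∈ Finset.range (T.depth l), (1 : ℝ) / (T.numChildren (T.parent^[k + 1] l))

/-- The expected length of the random root-to-leaf walk in `T`. -/
noncomputable def g (T : FiniteRootedTree) : ℝ :=
  ∑ l ∈ T.leaves, (T.depth l : ℝ) * T.leafProb l

/-- The number of vertices of the subtree of `T` rooted at `v`, i.e. the number
of vertices `u` having `v` as an ancestor (including `v` itself). -/
noncomputable def subtreeSize (T : FiniteRootedTree) (v : T.V) : ℕ :=
  Set.ncard {u : T.V | ∃ k : ℕ, T.parent^[k] u = v}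

end FiniteRootedTree

/-- The truncations of `T₁` and `T₂` at level `h` (the rooted trees induced on
the vertices of depth at most `h`) are isomorphic as rooted trees. -/
def TruncIso (T₁ T₂ : FiniteRootedTree) (h : ℕ) : Prop :=
  ∃ φ : {v : T₁.V // T₁.depth v ≤ h} ≃ {v : T₂.V // T₂.depth v ≤ h},
    (φ ⟨T₁.root, by simp [T₁.depth_root]⟩).val = T₂.root ∧
    ∀ u u' : {v : T₁.V // T₁.depth v ≤ h},
      T₁.IsChild u'.val u.val ↔ T₂.IsChild (φ u').val (φ u).val

/-- `InjM h U` is the set of root-respecting injective homomorphisms from the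
rooted tree `U` into the complete binary tree `M_h`, whose vertices are the
boolean lists of length at most `h`, rooted at the empty list, with the
children of a list being its two one-element extensions. -/
def InjM (h : ℕ) (U : FiniteRootedTree) : Set (U.V → List Bool) :=
  {α | Function.Injective α ∧ (∀ u, (α u).length ≤ h) ∧ α U.root = [] ∧
    ∀ u u' : U.V, U.IsChild u' u → ∃ b : Bool, α u' = α u ++ [b]}

/-!
XOR-ing all labels with a fixed leaf of `M_h` is an automorphism of `M_h`, and these automorphisms
act transitively on the leaves. Hence the number `N_U` of embeddings of `U` whose image contains a
given leaf does not depend on the leaf, and summing over the `2^h` leaves gives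
`2^h N_U = ∑_α #(α(V(U)) ∩ leaves) ≤ #leaves(U) · #Inj(U, M_h)`: an embedding sends to leaves only
vertices of depth `h`, and `U` has no more of those than leaves. The double sum of the theorem is
`∑_ℓ N_{U₁} N_{U₂} = 2^h N_{U₁} N_{U₂}`.
-/

namespace List

theorem zipWith_zipWith_of_involutive {α β : Type*} {f : α → β → α}
    (hf : ∀ b, Function.Involutive (f · b)) :
    ∀ {l : List α} {m : List β}, l.length ≤ m.length → zipWith f (zipWith f l m) m = l
  | [], _, _ => rfl
  | _ :: _, [], hl => by simp at hl
  | a :: l, b :: m, hl => by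
    simp only [zipWith_cons_cons, hf b a, zipWith_zipWith_of_involutive hf
      (by simpa using hl : l.length ≤ m.length)]

theorem zipWith_concat_of_length_lt {α β γ : Type*} (f : α → β → γ) (a : α) :
    ∀ {l : List α} {m : List β} (hl : l.length < m.length),
      zipWith f (l ++ [a]) m = zipWith f l m ++ [f a m[l.length]]
  | [], _ :: _, _ => rfl
  | _ :: l, _ :: m, hl => by
    simp only [cons_append, zipWith_cons_cons, length_cons, getElem_cons_succ,
      zipWith_concat_of_length_lt f a (by simpa using hl : l.length < m.length)]

theorem zipWith_xor_zipWith_xor {x d : List Bool} (hx : x.length ≤ d.length) :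
    zipWith xor (zipWith xor x d) d = x :=
  zipWith_zipWith_of_involutive (fun b a => by cases a <;> cases b <;> rfl) hx

end List

theorem Finset.sum_sum_card_filter_and {α β γ : Type*} (A : Finset α) (B : Finset β)
    (L : Finset γ) (P : α → γ → Prop) (Q : β → γ → Prop) [∀ a l, Decidable (P a l)]
    [∀ b l, Decidable (Q b l)] :
    ∑ a ∈ A, ∑ b ∈ B, (L.filter fun l => P a l ∧ Q b l).card =
      ∑ l ∈ L, (A.filter fun a => P a l).card * (B.filter fun b => Q b l).card := by
  simp only [Finset.card_filter, Finset.sum_mul_sum, ite_zero_mul_ite_zero, mul_one]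
  exact (Finset.sum_congr rfl fun _ _ => Finset.sum_comm).trans Finset.sum_comm

namespace FiniteRootedTree

theorem exists_isLeaf_iterate_parent_eq (T : FiniteRootedTree) (u : T.V) :
    ∃ w k, T.IsLeaf w ∧ T.parent^[k] w = u ∧ T.depth w = T.depth u + k := by
  -- a deepest descendant of `u` is a leaf
  let D := Finset.univ.filter fun w => ∃ k, T.parent^[k] w = u ∧ T.depth w = T.depth u + k
  obtain ⟨w, hwD, hmax⟩ := D.exists_max_image T.depth ⟨u, by simp [D]⟩
  obtain ⟨k, hwk, hdk⟩ := (Finset.mem_filter.mp hwD).2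
  refine ⟨w, k, fun c hc => ?_, hwk, hdk⟩
  have hdc : T.depth c = T.depth w + 1 := hc.2 ▸ T.depth_parent c hc.1
  have hcD : c ∈ D := Finset.mem_filter.mpr ⟨Finset.mem_univ c, k + 1,
    by rw [Function.iterate_succ_apply, hc.2, hwk], by omega⟩
  have := hmax c hcD
  omega

theorem card_filter_depth_eq_le_card_leaves (T : FiniteRootedTree) (n : ℕ) :
    (Finset.univ.filter fun u => T.depth u = n).card ≤ T.leaves.card := by
  choose w k hleaf hwk hdk using T.exists_isLeaf_iterate_parent_eq
  refine Finset.card_le_card_of_injOn w (fun u _ => by simp [leaves, hleaf u]) ?_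
  intro u hu u' hu' hww'
  simp only [Finset.coe_filter, Finset.mem_univ, true_and, Set.mem_ofPred_eq] at hu hu'
  have hk : k u = k u' := by have := hdk u; have := hdk u'; rw [hww'] at *; omega
  rw [← hwk u, ← hwk u', hww', hk]

end FiniteRootedTree

section InjM

variable {h : ℕ} {U : FiniteRootedTree}

theorem length_eq_depth_of_mem_InjM {α : U.V → List Bool} (hα : α ∈ InjM h U) (u : U.V) :
    (α u).length = U.depth u := by
  induction hn : U.depth u generalizing u with
  | zero => rw [U.root_of_depth_zero u hn, hα.2.2.1, List.length_nil]
  | succ n ih =>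
    have hu : u ≠ U.root := by rintro rfl; simp [U.depth_root] at hn
    obtain ⟨b, hb⟩ := hα.2.2.2 _ u ⟨hu, rfl⟩
    rw [hb, List.length_append, ih (U.parent u) (by have := U.depth_parent u hu; omega),
      List.length_singleton]

theorem finite_InjM (h : ℕ) (U : FiniteRootedTree) : (InjM h U).Finite :=
  (Set.Finite.pi fun _ : U.V => List.finite_length_le Bool h).subset
    fun _ hα u _ => hα.2.1 u

theorem zipWith_xor_mem_InjM {d : List Bool} (hd : d.length = h) {α : U.V → List Bool}
    (hα : α ∈ InjM h U) : (fun u => List.zipWith xor (α u) d) ∈ InjM h U := by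
  obtain ⟨hinj, hlen, hroot, hchild⟩ := hα
  have hcancel u : List.zipWith xor (List.zipWith xor (α u) d) d = α u :=
    List.zipWith_xor_zipWith_xor (hd ▸ hlen u)
  refine ⟨fun u u' huu' => hinj ?_, fun u => ?_, by simp [hroot], fun u u' hc => ?_⟩
  · rw [← hcancel u, ← hcancel u']
    exact congrArg (List.zipWith xor · d) huu'
  · simp only [List.length_zipWith]
    omega
  · obtain ⟨b, hb⟩ := hchild u u' hc
    have hlt : (α u).length < d.length := by
      have := hlen u'
      rw [hb, List.length_append, List.length_singleton] at this
      omega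
    exact ⟨xor b d[(α u).length], by
      dsimp only
      rw [hb, List.zipWith_concat_of_length_lt _ _ hlt]⟩

noncomputable def hitCount (h : ℕ) (U : FiniteRootedTree) (l : List Bool) : ℕ :=
  ((finite_InjM h U).toFinset.filter fun α => l ∈ Set.range α).card

theorem hitCount_le_hitCount {l l' : List Bool} (hl : l.length = h) (hl' : l'.length = h) :
    hitCount h U l ≤ hitCount h U l' := by
  have hld : List.zipWith xor l (List.zipWith xor l l') = l' := by
    rw [List.zipWith_comm_of_comm Bool.xor_comm,
      List.zipWith_comm_of_comm Bool.xor_comm (l := l), List.zipWith_xor_zipWith_xor (by omega)]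
  set d := List.zipWith xor l l'
  have hd : d.length = h := by simp [d, hl, hl']
  refine Finset.card_le_card_of_injOn (fun α u => List.zipWith xor (α u) d) ?_ ?_
  · intro α hα
    simp only [Finset.coe_filter, Set.Finite.mem_toFinset, Set.mem_ofPred_eq] at hα ⊢
    obtain ⟨hmem, u, rfl⟩ := hα
    exact ⟨zipWith_xor_mem_InjM hd hmem, u, hld⟩
  · intro α hα β hβ hαβ
    simp only [Finset.coe_filter, Set.Finite.mem_toFinset, Set.mem_ofPred_eq] at hα hβ
    funext u
    rw [← List.zipWith_xor_zipWith_xor (x := α u) (hd ▸ hα.1.2.1 u),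
      ← List.zipWith_xor_zipWith_xor (x := β u) (hd ▸ hβ.1.2.1 u)]
    exact congrArg (List.zipWith xor · d) (congrFun hαβ u)

theorem hitCount_eq_hitCount {l l' : List Bool} (hl : l.length = h) (hl' : l'.length = h) :
    hitCount h U l = hitCount h U l' :=
  le_antisymm (hitCount_le_hitCount hl hl') (hitCount_le_hitCount hl' hl)

end InjM

section LeafCount

variable {h : ℕ}

noncomputable def leavesM (h : ℕ) : Finset (List Bool) :=
  (List.finite_length_eq Bool h).toFinset

theorem mem_leavesM {l : List Bool} : l ∈ leavesM h ↔ l.length = h :=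
  Set.Finite.mem_toFinset _

theorem card_leavesM : (leavesM h).card = 2 ^ h := by
  rw [leavesM, ← Set.ncard_eq_toFinset_card _ (List.finite_length_eq Bool h),
    ← Nat.card_coe_set_eq]
  calc Nat.card {l : List Bool | l.length = h} = Nat.card (List.Vector Bool h) :=
        Nat.card_congr (Equiv.refl _)
    _ = 2 ^ h := by simp

theorem sum_hitCount_le (U : FiniteRootedTree) :
    ∑ l ∈ leavesM h, hitCount h U l ≤ U.leaves.card * (InjM h U).ncard := by
  have hleaves α (hα : α ∈ InjM h U) :
      ((leavesM h).filter fun l => l ∈ Set.range α).card ≤ U.leaves.card := by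
    calc ((leavesM h).filter fun l => l ∈ Set.range α).card
        ≤ ((Finset.univ.filter fun u => U.depth u = h).image α).card := by
          refine Finset.card_le_card fun l hl => ?_
          obtain ⟨hlh, u, rfl⟩ := Finset.mem_filter.mp hl
          exact Finset.mem_image_of_mem α (Finset.mem_filter.mpr ⟨Finset.mem_univ u,
            (length_eq_depth_of_mem_InjM hα u).symm.trans (mem_leavesM.mp hlh)⟩)
      _ ≤ (Finset.univ.filter fun u => U.depth u = h).card := Finset.card_image_le
      _ ≤ U.leaves.card := U.card_filter_depth_eq_le_card_leaves h
  calc ∑ l ∈ leavesM h, hitCount h U l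
      = ∑ α ∈ (finite_InjM h U).toFinset, ((leavesM h).filter fun l => l ∈ Set.range α).card := by
        simp only [hitCount, Finset.card_filter]
        exact Finset.sum_comm
    _ ≤ ∑ _α ∈ (finite_InjM h U).toFinset, U.leaves.card :=
        Finset.sum_le_sum fun α hα => hleaves α ((finite_InjM h U).mem_toFinset.mp hα)
    _ = U.leaves.card * (InjM h U).ncard := by
        rw [Finset.sum_const, smul_eq_mul, mul_comm, Set.ncard_eq_toFinset_card _ (finite_InjM h U)]

theorem two_pow_mul_hitCount_le (U : FiniteRootedTree) {l₀ : List Bool} (hl₀ : l₀.length = h) :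
    2 ^ h * hitCount h U l₀ ≤ U.leaves.card * (InjM h U).ncard := by
  rw [← card_leavesM, ← smul_eq_mul, ← Finset.sum_const,
    ← Finset.sum_congr rfl fun l hl => hitCount_eq_hitCount (mem_leavesM.mp hl) hl₀]
  exact sum_hitCount_le U

theorem sum_hitCount_mul_hitCount_eq {U₁ U₂ : FiniteRootedTree} {l₀ : List Bool}
    (hl₀ : l₀.length = h) :
    ∑ l ∈ leavesM h, hitCount h U₁ l * hitCount h U₂ l =
      2 ^ h * (hitCount h U₁ l₀ * hitCount h U₂ l₀) := by
  rw [Finset.sum_congr rfl fun l hl => by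
      rw [hitCount_eq_hitCount (mem_leavesM.mp hl) hl₀,
        hitCount_eq_hitCount (U := U₂) (mem_leavesM.mp hl) hl₀],
    Finset.sum_const, card_leavesM, smul_eq_mul]

theorem finsum_ncard_eq_sum_hitCount_mul (U₁ U₂ : FiniteRootedTree) :
    (∑ᶠ α₁ ∈ InjM h U₁, ∑ᶠ α₂ ∈ InjM h U₂,
        Set.ncard {l : List Bool | l.length = h ∧ l ∈ Set.range α₁ ∧ l ∈ Set.range α₂}) =
      ∑ l ∈ leavesM h, hitCount h U₁ l * hitCount h U₂ l := by
  have hset (α₁ : U₁.V → List Bool) (α₂ : U₂.V → List Bool) :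
      {l : List Bool | l.length = h ∧ l ∈ Set.range α₁ ∧ l ∈ Set.range α₂} =
        ↑((leavesM h).filter fun l => l ∈ Set.range α₁ ∧ l ∈ Set.range α₂) := by
    ext l
    simp [mem_leavesM]
  rw [finsum_mem_eq_finite_toFinset_sum _ (finite_InjM h U₁)]
  simp only [finsum_mem_eq_finite_toFinset_sum _ (finite_InjM h U₂), hset, Set.ncard_coe_finset]
  exact Finset.sum_sum_card_filter_and _ _ _ _ _

end LeafCount

/-- the expected number of leaves of `M_h` lying in both images of
two independent uniform injective homomorphisms is at most `a·b/2^h`. -/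
theorem stmt_4 (h : ℕ) (U₁ U₂ : FiniteRootedTree) :
    2 ^ h * (∑ᶠ α₁ ∈ InjM h U₁, ∑ᶠ α₂ ∈ InjM h U₂,
        Set.ncard {l : List Bool | l.length = h ∧
          l ∈ Set.range α₁ ∧ l ∈ Set.range α₂}) ≤
      U₁.leaves.card * U₂.leaves.card * (InjM h U₁).ncard * (InjM h U₂).ncard := by
  obtain ⟨l₀, hl₀⟩ : ∃ l₀ : List Bool, l₀.length = h := ⟨List.replicate h false, by simp⟩
  calc 2 ^ h * (∑ᶠ α₁ ∈ InjM h U₁, ∑ᶠ α₂ ∈ InjM h U₂,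
        Set.ncard {l : List Bool | l.length = h ∧ l ∈ Set.range α₁ ∧ l ∈ Set.range α₂})
      = (2 ^ h * hitCount h U₁ l₀) * (2 ^ h * hitCount h U₂ l₀) := by
        rw [finsum_ncard_eq_sum_hitCount_mul, sum_hitCount_mul_hitCount_eq hl₀]
        ring
    _ ≤ (U₁.leaves.card * (InjM h U₁).ncard) * (U₂.leaves.card * (InjM h U₂).ncard) :=
        Nat.mul_le_mul (two_pow_mul_hitCount_le U₁ hl₀) (two_pow_mul_hitCount_le U₂ hl₀)
    _ = U₁.leaves.card * U₂.leaves.card * (InjM h U₁).ncard * (InjM h U₂).ncard := by ring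
end

section
/- Let T be a finite rooted tree in which no vertex has exactly one child and suppose some vertex of T has at least three children. Then there exists a finite rooted tree T', in which no vertex has exactly one child, having the same number of leaves as T, such that g(T') > g(T). -/
attribute [local instance] Classical.propDecidable

/-!
Pick a vertex `v` with `c ≥ 3` children and, among them, a child `u₀` whose subtree contributes
most to `g`. Insert a new vertex below `v` and move the other `c - 1` children of `v` under it: no
vertex becomes unary and the leaves stay the same. Leaves below `u₀` keep their depth and their
probability is multiplied by `c / 2`; leaves below a moved child get one step deeper and their
probability is multiplied by `c / (2(c - 1))`. If `B` is the contribution of the subtree of `u₀`,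
`S ≤ (c - 1) B` that of the moved subtrees and `p` the probability of reaching `v`, then `g` grows
by `(c/2 - 1) B - (c - 2) / (2(c - 1)) S + p / 2 ≥ p / 2 > 0`.
-/

namespace FiniteRootedTree

variable {T : FiniteRootedTree}

noncomputable def children (T : FiniteRootedTree) (v : T.V) : Finset T.V :=
  Finset.univ.filter (T.IsChild · v)

@[simp]
lemma mem_children {u v : T.V} : u ∈ T.children v ↔ T.IsChild u v := by
  simp [children]

lemma numChildren_eq_card (v : T.V) : T.numChildren v = (T.children v).card := by
  rw [numChildren, ← Set.ncard_coe_finset]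
  congr
  ext
  simp

lemma isLeaf_iff_numChildren_eq_zero {v : T.V} : T.IsLeaf v ↔ T.numChildren v = 0 := by
  simp [IsLeaf, numChildren_eq_card, Finset.card_eq_zero, Finset.eq_empty_iff_forall_notMem]

lemma isChild_parent {x : T.V} (hx : x ≠ T.root) : T.IsChild x (T.parent x) := ⟨hx, rfl⟩

lemma IsChild.depth_eq {u v : T.V} (h : T.IsChild u v) : T.depth u = T.depth v + 1 := by
  rw [T.depth_parent u h.1, h.2]

lemma IsChild.numChildren_pos {u v : T.V} (h : T.IsChild u v) : 0 < T.numChildren v := by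
  rw [numChildren_eq_card]
  exact Finset.card_pos.2 ⟨u, mem_children.2 h⟩

theorem induction_from_root {P : T.V → Prop} (root : P T.root)
    (step : ∀ x, x ≠ T.root → P (T.parent x) → P x) (x : T.V) : P x := by
  induction h : T.depth x generalizing x with
  | zero => exact T.root_of_depth_zero x h ▸ root
  | succ n ih =>
    have hx : x ≠ T.root := by rintro rfl; simp [T.depth_root] at h
    exact step x hx (ih _ (by have := T.depth_parent x hx; omega))

theorem induction_from_leaves {P : T.V → Prop}
    (step : ∀ v, (∀ u, T.IsChild u v → P u) → P v) (v : T.V) : P v := by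
  induction h : Finset.univ.sup T.depth - T.depth v using Nat.strong_induction_on
    generalizing v with
  | _ n ih =>
    refine step v fun u hu => ih _ ?_ u rfl
    have := Finset.le_sup (f := T.depth) (Finset.mem_univ u)
    have := hu.depth_eq
    omega

@[simp]
lemma leafProb_root : T.leafProb T.root = 1 := by
  simp [leafProb, T.depth_root]

lemma leafProb_of_ne_root {x : T.V} (hx : x ≠ T.root) :
    T.leafProb x = T.leafProb (T.parent x) / T.numChildren (T.parent x) := by
  rw [leafProb, leafProb, T.depth_parent x hx, Finset.prod_range_succ']
  simp only [Function.iterate_succ_apply, Function.iterate_zero_apply]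
  ring

lemma IsChild.leafProb_eq {u v : T.V} (h : T.IsChild u v) :
    T.leafProb u = T.leafProb v / T.numChildren v := by
  rw [leafProb_of_ne_root h.1, h.2]

lemma leafProb_pos (x : T.V) : 0 < T.leafProb x := by
  induction x using induction_from_root with
  | root => simp
  | step x hx ih =>
    rw [leafProb_of_ne_root hx]
    exact div_pos ih (by exact_mod_cast (isChild_parent hx).numChildren_pos)

variable (T) in
/-- `T.IsAncestor v x`: `v` lies on the path from the root to `x` (possibly `v = x`). -/
def IsAncestor (v x : T.V) : Prop := Relation.ReflTransGen (fun a b => T.IsChild b a) v x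

@[refl]
lemma IsAncestor.refl (x : T.V) : T.IsAncestor x x := Relation.ReflTransGen.refl

lemma IsChild.isAncestor {u v : T.V} (h : T.IsChild u v) : T.IsAncestor v u :=
  Relation.ReflTransGen.single h

lemma IsAncestor.trans {a b c : T.V} (hab : T.IsAncestor a b) (hbc : T.IsAncestor b c) :
    T.IsAncestor a c :=
  Relation.ReflTransGen.trans hab hbc

lemma IsAncestor.depth_le {v x : T.V} (h : T.IsAncestor v x) : T.depth v ≤ T.depth x := by
  induction h with
  | refl => rfl
  | tail _ hc ih => rw [hc.depth_eq]; omega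

lemma IsAncestor.eq_of_depth_le {v x : T.V} (h : T.IsAncestor v x)
    (hd : T.depth x ≤ T.depth v) : v = x := by
  rcases h with _ | ⟨hvc, hcx⟩
  · rfl
  · have := IsAncestor.depth_le hvc; have := hcx.depth_eq; omega

lemma IsAncestor.isAncestor_parent {v x : T.V} (h : T.IsAncestor v x) (hne : v ≠ x) :
    T.IsAncestor v (T.parent x) := by
  rcases h with _ | ⟨hvc, hcx⟩
  · exact absurd rfl hne
  · rwa [hcx.2]

lemma IsAncestor.exists_isChild {v x : T.V} (h : T.IsAncestor v x) (hne : v ≠ x) :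
    ∃ u, T.IsChild u v ∧ T.IsAncestor u x := by
  rcases Relation.ReflTransGen.cases_head_iff.1 h with rfl | ⟨u, hu, hux⟩
  · exact absurd rfl hne
  · exact ⟨u, hu, hux⟩

lemma IsAncestor.eq_of_depth_eq {a b x : T.V} (ha : T.IsAncestor a x) (hb : T.IsAncestor b x)
    (hd : T.depth a = T.depth b) : a = b := by
  induction ha with
  | refl => exact (hb.eq_of_depth_le hd.le).symm
  | @tail c x hac hcx ih =>
    have hbx : b ≠ x := by
      rintro rfl
      have := IsAncestor.depth_le hac; have := hcx.depth_eq; omega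
    exact ih (hcx.2 ▸ hb.isAncestor_parent hbx)

lemma eq_of_isChild_of_isAncestor {u u' v x : T.V} (hu : T.IsChild u v) (hu' : T.IsChild u' v)
    (hux : T.IsAncestor u x) (hux' : T.IsAncestor u' x) : u = u' :=
  hux.eq_of_depth_eq hux' (by rw [hu.depth_eq, hu'.depth_eq])

variable (T) in
noncomputable def leavesBelow (v : T.V) : Finset T.V := T.leaves.filter (T.IsAncestor v)

lemma leavesBelow_of_isLeaf {v : T.V} (hv : T.IsLeaf v) : T.leavesBelow v = {v} := by
  ext l
  simp only [leavesBelow, leaves, Finset.mem_filter, Finset.mem_univ, true_and,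
    Finset.mem_singleton]
  constructor
  · rintro ⟨-, hvl⟩
    by_contra hne
    obtain ⟨u, hu, -⟩ := hvl.exists_isChild (Ne.symm hne)
    exact hv u hu
  · rintro rfl
    exact ⟨hv, .refl l⟩

lemma sum_leavesBelow_of_not_isLeaf {v : T.V} (hv : ¬ T.IsLeaf v) (F : T.V → ℝ) :
    ∑ l ∈ T.leavesBelow v, F l = ∑ u ∈ T.children v, ∑ l ∈ T.leavesBelow u, F l := by
  have hsplit : T.leavesBelow v = (T.children v).biUnion T.leavesBelow := by
    ext l
    simp only [leavesBelow, Finset.mem_biUnion, Finset.mem_filter, mem_children]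
    constructor
    · rintro ⟨hl, hvl⟩
      have hne : v ≠ l := by rintro rfl; exact hv (Finset.mem_filter.1 hl).2
      obtain ⟨u, hu, hul⟩ := hvl.exists_isChild hne
      exact ⟨u, hu, hl, hul⟩
    · rintro ⟨u, hu, hl, hul⟩
      exact ⟨hl, hu.isAncestor.trans hul⟩
  rw [hsplit, Finset.sum_biUnion]
  intro u hu u' hu' hne
  refine Finset.disjoint_left.2 fun l hl hl' => hne ?_
  exact eq_of_isChild_of_isAncestor (mem_children.1 hu) (mem_children.1 hu')
    (Finset.mem_filter.1 hl).2 (Finset.mem_filter.1 hl').2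

lemma sum_leafProb_leavesBelow (v : T.V) : ∑ l ∈ T.leavesBelow v, T.leafProb l = T.leafProb v := by
  induction v using induction_from_leaves with
  | step v ih =>
    by_cases hv : T.IsLeaf v
    · simp [leavesBelow_of_isLeaf hv]
    · have hc : (T.numChildren v : ℝ) ≠ 0 := by
        exact_mod_cast mt isLeaf_iff_numChildren_eq_zero.2 hv
      rw [sum_leavesBelow_of_not_isLeaf hv]
      calc ∑ u ∈ T.children v, ∑ l ∈ T.leavesBelow u, T.leafProb l
          = ∑ _u ∈ T.children v, T.leafProb v / T.numChildren v :=
            Finset.sum_congr rfl fun u hu => by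
              rw [ih u (mem_children.1 hu), (mem_children.1 hu).leafProb_eq]
        _ = T.leafProb v := by
            rw [Finset.sum_const, nsmul_eq_mul, ← numChildren_eq_card]
            field_simp

lemma sum_leaves_eq_add_sum_children {v : T.V} (hv : ¬ T.IsLeaf v) (F : T.V → ℝ) :
    ∑ l ∈ T.leaves, F l = ∑ l ∈ T.leaves.filter (¬ T.IsAncestor v ·), F l
      + ∑ u ∈ T.children v, ∑ l ∈ T.leavesBelow u, F l := by
  rw [← sum_leavesBelow_of_not_isLeaf hv, leavesBelow, add_comm,
    Finset.sum_filter_add_sum_filter_not]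

section Graft

variable (T) (v u₀ : T.V)

def IsMoved (x : T.V) : Prop := T.IsChild x v ∧ x ≠ u₀

def BelowMoved (x : T.V) : Prop := ∃ u, T.IsMoved v u₀ u ∧ T.IsAncestor u x

variable {T v u₀}

lemma IsMoved.belowMoved {x : T.V} (h : T.IsMoved v u₀ x) : T.BelowMoved v u₀ x :=
  ⟨x, h, .refl x⟩

lemma BelowMoved.isAncestor {x : T.V} (h : T.BelowMoved v u₀ x) : T.IsAncestor v x := by
  obtain ⟨u, hu, hux⟩ := h
  exact hu.1.isAncestor.trans hux

lemma BelowMoved.depth_lt {x : T.V} (h : T.BelowMoved v u₀ x) : T.depth v < T.depth x := by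
  obtain ⟨u, hu, hux⟩ := h
  have := hux.depth_le; have := hu.1.depth_eq; omega

lemma belowMoved_parent_iff {x : T.V} (hx : x ≠ T.root) (hm : ¬ T.IsMoved v u₀ x) :
    T.BelowMoved v u₀ (T.parent x) ↔ T.BelowMoved v u₀ x := by
  constructor
  · rintro ⟨u, hu, hux⟩
    exact ⟨u, hu, hux.trans (isChild_parent hx).isAncestor⟩
  · rintro ⟨u, hu, hux⟩
    have hne : u ≠ x := by rintro rfl; exact hm hu
    exact ⟨u, hu, hux.isAncestor_parent hne⟩

variable (T v u₀)

/-- The tree obtained by inserting a new vertex `none` as a child of `v` and making it the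
parent of every child of `v` other than `u₀`. -/
@[reducible] noncomputable def graft : FiniteRootedTree where
  V := Option T.V
  fintypeV := inferInstance
  root := some T.root
  parent
    | none => some v
    | some x => if T.IsMoved v u₀ x then none else some (T.parent x)
  depth
    | none => T.depth v + 1
    | some x => if T.BelowMoved v u₀ x then T.depth x + 1 else T.depth x
  depth_root := by
    have : ¬ T.BelowMoved v u₀ T.root := fun h => by
      have := h.depth_lt; simp [T.depth_root] at this
    simp [this, T.depth_root]
  depth_parent := by
    rintro (_ | x) hx
    · simp [show ¬ T.BelowMoved v u₀ v from fun h => h.depth_lt.false]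
    · have hx : x ≠ T.root := fun h => hx (h ▸ rfl)
      by_cases hm : T.IsMoved v u₀ x
      · simp [hm, hm.belowMoved, hm.1.depth_eq]
      · have := T.depth_parent x hx
        by_cases hs : T.BelowMoved v u₀ x <;>
          simp [hm, hs, belowMoved_parent_iff hx hm, this]
  root_of_depth_zero := by
    rintro (_ | x) h
    · simp at h
    · by_cases hs : T.BelowMoved v u₀ x
      · simp [hs] at h
      · simp only [hs, if_false] at h
        rw [T.root_of_depth_zero x h]

variable {T v u₀}

lemma graft_root : (T.graft v u₀).root = some T.root := rfl

lemma graft_parent_some_of_not_isMoved {x : T.V} (hm : ¬ T.IsMoved v u₀ x) :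
    (T.graft v u₀).parent (some x) = some (T.parent x) := if_neg hm

lemma graft_parent_some_of_isMoved {x : T.V} (hm : T.IsMoved v u₀ x) :
    (T.graft v u₀).parent (some x) = none := if_pos hm

lemma graft_parent_none : (T.graft v u₀).parent none = some v := rfl

lemma graft_isChild_some_some {x y : T.V} :
    (T.graft v u₀).IsChild (some x) (some y) ↔ T.IsChild x y ∧ ¬ T.IsMoved v u₀ x := by
  by_cases hm : T.IsMoved v u₀ x <;> simp [IsChild, hm]

lemma graft_isChild_some_none {x : T.V} :
    (T.graft v u₀).IsChild (some x) none ↔ T.IsMoved v u₀ x := by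
  by_cases hm : T.IsMoved v u₀ x
  · simp [IsChild, hm, hm.1.1]
  · simp [IsChild, hm]

lemma graft_isChild_none {y : (T.graft v u₀).V} :
    (T.graft v u₀).IsChild none y ↔ y = some v := by
  simp [IsChild, eq_comm]

lemma graft_numChildren_some {y : T.V} (hy : y ≠ v) :
    (T.graft v u₀).numChildren (some y) = T.numChildren y := by
  unfold numChildren
  rw [← Set.ncard_image_of_injective {u | T.IsChild u y} (Option.some_injective _)]
  congr 1
  ext (_ | x)
  · simp [graft_isChild_none, hy]
  · simp only [Set.mem_ofPred_eq, graft_isChild_some_some, Set.mem_image, Option.some.injEq,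
      exists_eq_right, and_iff_left_iff_imp]
    rintro hxy ⟨hxv, -⟩
    exact hy (hxy.2 ▸ hxv.2)

lemma graft_numChildren_some_self (hu₀ : T.IsChild u₀ v) :
    (T.graft v u₀).numChildren (some v) = 2 := by
  unfold numChildren
  rw [← Set.ncard_pair (Option.some_ne_none u₀)]
  congr 1
  ext (_ | x)
  · simp [graft_isChild_none]
  · by_cases hx : x = u₀ <;> simp [graft_isChild_some_some, IsMoved, hx, hu₀]

lemma graft_numChildren_none (hu₀ : T.IsChild u₀ v) :
    (T.graft v u₀).numChildren none = T.numChildren v - 1 := by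
  unfold numChildren
  rw [← Set.ncard_sdiff_singleton_of_mem (a := u₀) hu₀,
    ← Set.ncard_image_of_injective ({u | T.IsChild u v} \ {u₀}) (Option.some_injective _)]
  congr 1
  ext (_ | x)
  · simp [graft_isChild_none]
  · simp [graft_isChild_some_none, IsMoved]

lemma graft_isLeaf_some (hu₀ : T.IsChild u₀ v) {x : T.V} :
    (T.graft v u₀).IsLeaf (some x) ↔ T.IsLeaf x := by
  by_cases hx : x = v
  · subst hx
    simp [isLeaf_iff_numChildren_eq_zero, graft_numChildren_some_self hu₀,
      hu₀.numChildren_pos.ne']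
  · simp [isLeaf_iff_numChildren_eq_zero, graft_numChildren_some hx]

lemma graft_leaves (hu₀ : T.IsChild u₀ v) (hc : 2 ≤ T.numChildren v) :
    (T.graft v u₀).leaves = T.leaves.map .some := by
  ext (_ | x)
  · simp [leaves, isLeaf_iff_numChildren_eq_zero, graft_numChildren_none hu₀]
    omega
  · simp [leaves, graft_isLeaf_some hu₀]

lemma graft_numChildren_ne_one (hu₀ : T.IsChild u₀ v) (hc : 3 ≤ T.numChildren v)
    (hone : ∀ w, T.numChildren w ≠ 1) (w : (T.graft v u₀).V) :
    (T.graft v u₀).numChildren w ≠ 1 := by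
  rcases w with _ | y
  · rw [graft_numChildren_none hu₀]; omega
  · by_cases hy : y = v
    · rw [hy, graft_numChildren_some_self hu₀]; omega
    · rw [graft_numChildren_some hy]; exact hone y

lemma graft_leafProb_some_of_not_isMoved {x : T.V} (hx : x ≠ T.root)
    (hm : ¬ T.IsMoved v u₀ x) (hpv : T.parent x ≠ v) :
    (T.graft v u₀).leafProb (some x)
      = (T.graft v u₀).leafProb (some (T.parent x)) / T.numChildren (T.parent x) := by
  rw [leafProb_of_ne_root (by simpa [graft_root] using hx), graft_parent_some_of_not_isMoved hm,
    graft_numChildren_some hpv]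

lemma graft_leafProb_some_of_not_isAncestor {x : T.V} (h : ¬ T.IsAncestor v x) :
    (T.graft v u₀).leafProb (some x) = T.leafProb x := by
  induction x using induction_from_root with
  | root => exact (leafProb_root (T := T.graft v u₀)).trans (leafProb_root (T := T)).symm
  | step x hx ih =>
    have hvp : ¬ T.IsAncestor v (T.parent x) := fun hvp =>
      h (hvp.trans (isChild_parent hx).isAncestor)
    have hm : ¬ T.IsMoved v u₀ x := fun hm => h hm.1.isAncestor
    have hpv : T.parent x ≠ v := fun hpv => hvp (hpv ▸ .refl _)
    rw [graft_leafProb_some_of_not_isMoved hx hm hpv, ih hvp, T.leafProb_of_ne_root hx]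

lemma graft_leafProb_some_self : (T.graft v u₀).leafProb (some v) = T.leafProb v := by
  by_cases hv : v = T.root
  · subst hv
    exact (leafProb_root (T := T.graft T.root u₀)).trans (leafProb_root (T := T)).symm
  · have hvp : ¬ T.IsAncestor v (T.parent v) := fun h => by
      have := h.depth_le; have := (isChild_parent hv).depth_eq; omega
    have hm : ¬ T.IsMoved v u₀ v := fun hm => by have := hm.1.depth_eq; omega
    have hpv : T.parent v ≠ v := fun hpv => hvp (by rw [hpv])
    rw [graft_leafProb_some_of_not_isMoved hv hm hpv,
      graft_leafProb_some_of_not_isAncestor hvp, T.leafProb_of_ne_root hv]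

lemma graft_leafProb_some_of_isAncestor {u x : T.V} (hu : T.IsChild u v) (h : T.IsAncestor u x)
    {r : ℝ} (hr : (T.graft v u₀).leafProb (some u) = r * T.leafProb u) :
    (T.graft v u₀).leafProb (some x) = r * T.leafProb x := by
  induction h with
  | refl => exact hr
  | @tail c x huc hxc ih =>
    have := IsAncestor.depth_le huc
    have := hxc.depth_eq
    have := hu.depth_eq
    have hm : ¬ T.IsMoved v u₀ x := fun hm => by have := hm.1.depth_eq; omega
    have hcv : c ≠ v := by rintro rfl; omega
    rw [graft_leafProb_some_of_not_isMoved hxc.1 hm (hxc.2 ▸ hcv), hxc.2, ih, hxc.leafProb_eq,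
      mul_div_assoc]

lemma graft_leafProb_some_of_isAncestor_kept (hu₀ : T.IsChild u₀ v) {x : T.V}
    (h : T.IsAncestor u₀ x) :
    (T.graft v u₀).leafProb (some x) = T.numChildren v / 2 * T.leafProb x := by
  refine graft_leafProb_some_of_isAncestor hu₀ h ?_
  have hc : (T.numChildren v : ℝ) ≠ 0 := by exact_mod_cast hu₀.numChildren_pos.ne'
  rw [leafProb_of_ne_root (by simpa [graft_root] using hu₀.1),
    graft_parent_some_of_not_isMoved (fun hm => hm.2 rfl), hu₀.2,
    graft_numChildren_some_self hu₀, graft_leafProb_some_self, hu₀.leafProb_eq]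
  push_cast
  field_simp

lemma graft_leafProb_some_of_belowMoved (hu₀ : T.IsChild u₀ v) {x : T.V}
    (h : T.BelowMoved v u₀ x) :
    (T.graft v u₀).leafProb (some x)
      = T.numChildren v / (2 * (T.numChildren v - 1)) * T.leafProb x := by
  obtain ⟨u, hu, hux⟩ := h
  refine graft_leafProb_some_of_isAncestor hu.1 hux ?_
  have hc : (T.numChildren v : ℝ) ≠ 0 := by exact_mod_cast hu₀.numChildren_pos.ne'
  have hnone : (T.graft v u₀).leafProb none = T.leafProb v / 2 := by
    rw [leafProb_of_ne_root (by simp), graft_parent_none,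
      graft_numChildren_some_self hu₀, graft_leafProb_some_self]
    norm_num
  rw [leafProb_of_ne_root (by simpa [graft_root] using hu.1.1),
    graft_parent_some_of_isMoved hu, hnone, graft_numChildren_none hu₀,
    Nat.cast_pred hu₀.numChildren_pos, hu.1.leafProb_eq]
  field_simp

lemma graft_depth_some_of_not_belowMoved {x : T.V} (h : ¬ T.BelowMoved v u₀ x) :
    (T.graft v u₀).depth (some x) = T.depth x := if_neg h

lemma graft_depth_some_of_belowMoved {x : T.V} (h : T.BelowMoved v u₀ x) :
    (T.graft v u₀).depth (some x) = T.depth x + 1 := if_pos h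

variable (T) in
noncomputable def gBelow (v : T.V) : ℝ := ∑ l ∈ T.leavesBelow v, (T.depth l : ℝ) * T.leafProb l

lemma g_eq_of_isChild (hu₀ : T.IsChild u₀ v) :
    T.g = ∑ l ∈ T.leaves.filter (¬ T.IsAncestor v ·), (T.depth l : ℝ) * T.leafProb l
      + (T.gBelow u₀ + ∑ u ∈ (T.children v).erase u₀, T.gBelow u) := by
  rw [g, sum_leaves_eq_add_sum_children (fun h => h u₀ hu₀),
    Finset.add_sum_erase _ _ (mem_children.2 hu₀)]
  rfl

lemma g_graft_eq_sum_leaves (hu₀ : T.IsChild u₀ v) (hc : 2 ≤ T.numChildren v) :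
    (T.graft v u₀).g
      = ∑ l ∈ T.leaves, ((T.graft v u₀).depth (some l) : ℝ) * (T.graft v u₀).leafProb (some l) := by
  rw [g, graft_leaves hu₀ hc, Finset.sum_map]
  rfl

lemma g_graft (hu₀ : T.IsChild u₀ v) (hc : 2 ≤ T.numChildren v) :
    (T.graft v u₀).g = ∑ l ∈ T.leaves.filter (¬ T.IsAncestor v ·), (T.depth l : ℝ) * T.leafProb l
      + (T.numChildren v / 2 * T.gBelow u₀
        + ∑ u ∈ (T.children v).erase u₀, T.numChildren v / (2 * (T.numChildren v - 1))
          * (T.gBelow u + T.leafProb v / T.numChildren v)) := by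
  rw [g_graft_eq_sum_leaves hu₀ hc, sum_leaves_eq_add_sum_children (fun h => h u₀ hu₀),
    ← Finset.add_sum_erase _ _ (mem_children.2 hu₀)]
  congr 1
  · refine Finset.sum_congr rfl fun l hl => ?_
    have hl := (Finset.mem_filter.1 hl).2
    rw [graft_depth_some_of_not_belowMoved (fun h => hl h.isAncestor),
      graft_leafProb_some_of_not_isAncestor hl]
  congr 1
  · rw [gBelow, Finset.mul_sum]
    refine Finset.sum_congr rfl fun l hl => ?_
    have hl := (Finset.mem_filter.1 hl).2
    have hs : ¬ T.BelowMoved v u₀ l := fun ⟨u, hu, hul⟩ =>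
      hu.2 (eq_of_isChild_of_isAncestor hu.1 hu₀ hul hl)
    rw [graft_depth_some_of_not_belowMoved hs, graft_leafProb_some_of_isAncestor_kept hu₀ hl]
    ring
  · refine Finset.sum_congr rfl fun u hu => ?_
    obtain ⟨hne, hu⟩ := Finset.mem_erase.1 hu
    have hmu : T.IsMoved v u₀ u := ⟨mem_children.1 hu, hne⟩
    rw [← hmu.1.leafProb_eq, ← sum_leafProb_leavesBelow, gBelow, ← Finset.sum_add_distrib,
      Finset.mul_sum]
    refine Finset.sum_congr rfl fun l hl => ?_
    have hl := (Finset.mem_filter.1 hl).2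
    rw [graft_depth_some_of_belowMoved ⟨u, hmu, hl⟩,
      graft_leafProb_some_of_belowMoved hu₀ ⟨u, hmu, hl⟩]
    push_cast
    ring

lemma g_lt_g_graft (hu₀ : T.IsChild u₀ v) (hc : 2 ≤ T.numChildren v)
    (hmax : ∀ u, T.IsChild u v → T.gBelow u ≤ T.gBelow u₀) :
    T.g < (T.graft v u₀).g := by
  rw [g_eq_of_isChild hu₀, g_graft hu₀ hc, add_lt_add_iff_left]
  have hc2 : (2 : ℝ) ≤ T.numChildren v := by exact_mod_cast hc
  set c : ℝ := (T.numChildren v : ℝ)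
  set S := ∑ u ∈ (T.children v).erase u₀, T.gBelow u
  have hc1 : c - 1 ≠ 0 := by linarith
  have hcard : (((T.children v).erase u₀).card : ℝ) = c - 1 := by
    rw [Finset.card_erase_of_mem (mem_children.2 hu₀), ← numChildren_eq_card,
      Nat.cast_pred hu₀.numChildren_pos]
  have hS : S ≤ (c - 1) * T.gBelow u₀ := by
    rw [← hcard, ← nsmul_eq_mul]
    exact Finset.sum_le_card_nsmul _ _ _ fun u hu =>
      hmax u (mem_children.1 (Finset.mem_of_mem_erase hu))
  have hsum : ∑ u ∈ (T.children v).erase u₀, c / (2 * (c - 1)) * (T.gBelow u + T.leafProb v / c)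
      = S - (c - 2) / (2 * (c - 1)) * S + T.leafProb v / 2 := by
    rw [← Finset.mul_sum, Finset.sum_add_distrib, Finset.sum_const, nsmul_eq_mul, hcard]
    field_simp
    ring
  have hloss : (c - 2) / (2 * (c - 1)) * S ≤ (c - 2) / 2 * T.gBelow u₀ := by
    calc (c - 2) / (2 * (c - 1)) * S ≤ (c - 2) / (2 * (c - 1)) * ((c - 1) * T.gBelow u₀) :=
          mul_le_mul_of_nonneg_left hS (div_nonneg (by linarith) (by linarith))
      _ = (c - 2) / 2 * T.gBelow u₀ := by field_simp
  rw [hsum]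
  linarith [T.leafProb_pos v]

end Graft

end FiniteRootedTree

/-- if no vertex has exactly one child and some vertex has at least
three children, then some tree with the same number of leaves (and no unary
vertex) has strictly larger expected walk length. -/
theorem stmt_10 (T : FiniteRootedTree) (hone : ∀ v : T.V, T.numChildren v ≠ 1)
    (hbig : ∃ v : T.V, 3 ≤ T.numChildren v) :
    ∃ T' : FiniteRootedTree, (∀ v : T'.V, T'.numChildren v ≠ 1) ∧
      T'.leaves.card = T.leaves.card ∧ T.g < T'.g := by
  obtain ⟨v, hv⟩ := hbig
  have hchildren : (T.children v).Nonempty := by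
    rw [← Finset.card_pos, ← FiniteRootedTree.numChildren_eq_card]
    omega
  obtain ⟨u₀, hu₀, hmax⟩ := Finset.exists_max_image (T.children v) T.gBelow hchildren
  rw [FiniteRootedTree.mem_children] at hu₀
  refine ⟨T.graft v u₀, FiniteRootedTree.graft_numChildren_ne_one hu₀ hv hone, ?_, ?_⟩
  · rw [FiniteRootedTree.graft_leaves hu₀ (by omega), Finset.card_map]
  · exact FiniteRootedTree.g_lt_g_graft hu₀ (by omega) fun u hu =>
      hmax u (FiniteRootedTree.mem_children.2 hu)
end
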